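/- arXiv:2509.19884 — 2 statements merged into one kernel-verified Lean document; each statement's English description precedes it below -/
import Mathlib

section
/- For a single group h, max over interval indicators g of Δ_{h,g}(f) = (n_h/n)·ECCE_h(f), where Δ_{h,g}(f) = |(1/n)·Σ_k h(x_k)·g(f(x_k))·(y_k - f(x_k))|, n_h = |{k : h(x_k)=1}|, and ECCE_h(f) is the ECCE on the subsample where h(x_k)=1. -/
/-! On the subsample selected by `h`, each deviation `Δ_{h,g}(f)` is `|∑ g(F i) r i| / n`, where
`F` are the sorted scores and `r` the residuals. Since `F` is strictly increasing, the indices whose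
score lies in an interval form a block `Icc i j` or are empty, and every block arises from the
interval `[F i, F j] ⊆ [0,1]`. So the deviations are exactly `0` and the block sums divided by `n`,
and the extra value `0` does not change the supremum. -/

/-- `g` is the indicator of an interval `I ⊆ [0,1]`. -/
def IsIntervalIndicator (g : ℝ → ℝ) : Prop :=
  ∃ I : Set ℝ, I ⊆ Set.Icc 0 1 ∧ I.OrdConnected ∧ g = I.indicator fun _ => 1

/-- The multicalibration deviation `Δ_{h,g}(f)`. -/
noncomputable def mcDev {X : Type*} (n : ℕ) (x : Fin n → X) (y : Fin n → ℝ)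
    (f : X → ℝ) (h : X → ℝ) (g : ℝ → ℝ) : ℝ :=
  |(1 / n : ℝ) * ∑ k, h (x k) * g (f (x k)) * (y k - f (x k))|

/-- ECCE of a (sorted) sample of size `m`: `(1/m)` times the maximum over contiguous
index intervals of the absolute sum of residuals. -/
noncomputable def ecce (m : ℕ) (y f : Fin m → ℝ) : ℝ :=
  (1 / m : ℝ) *
    sSup {v : ℝ | ∃ i j : Fin m, i ≤ j ∧ v = |∑ k ∈ Finset.Icc i j, (y k - f k)|}

open Finset Fintype in
theorem sum_mul_eq_sum_comp_of_zero_one {ι κ R : Type*} [Fintype ι] [Fintype κ] [Semiring R]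
    {w : ι → R} (hw : ∀ k, w k = 0 ∨ w k = 1) {e : κ → ι} (he : Function.Injective e)
    (hrange : ∀ k, w k = 1 ↔ ∃ i, e i = k) (c : ι → R) :
    ∑ k, w k * c k = ∑ i, c (e i) := by
  refine (sum_of_injective e he _ _ (fun k hk => ?_) fun i => ?_).symm
  · have : w k ≠ 1 := fun h1 => hk ((hrange k).1 h1)
    simp [(hw k).resolve_right this]
  · simp [(hrange (e i)).2 ⟨i, rfl⟩]

theorem Finset.eq_empty_or_eq_Icc_of_ordConnected {α : Type*} [LinearOrder α]
    [LocallyFiniteOrder α] (s : Finset α) (hs : (s : Set α).OrdConnected) :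
    s = ∅ ∨ ∃ a b, a ≤ b ∧ s = Icc a b := by
  obtain rfl | hne := s.eq_empty_or_nonempty
  · exact Or.inl rfl
  refine Or.inr ⟨s.min' hne, s.max' hne, s.min'_le _ (s.max'_mem hne), ?_⟩
  ext i
  rw [mem_Icc]
  exact ⟨fun hi => ⟨s.min'_le i hi, s.le_max' i hi⟩,
    fun hi => hs.out (s.min'_mem hne) (s.max'_mem hne) hi⟩

theorem Real.sSup_insert_zero {s : Set ℝ} (hs : BddAbove s) (h0 : ∀ x ∈ s, 0 ≤ x) :
    sSup (insert 0 s) = sSup s := by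
  obtain rfl | hne := s.eq_empty_or_nonempty
  · simp
  rw [csSup_insert hs hne, sup_eq_right]
  exact Real.sSup_nonneg h0

open Finset in
theorem sum_indicator_comp_mul {α : Type*} [Fintype α] (F : α → ℝ) (I : Set ℝ)
    [DecidablePred fun i => F i ∈ I] (r : α → ℝ) :
    ∑ i, I.indicator (fun _ => 1) (F i) * r i = ∑ i with F i ∈ I, r i := by
  rw [sum_filter]
  refine sum_congr rfl fun i _ => ?_
  simp [Set.indicator_apply, ite_mul]

open Finset in
theorem setOf_abs_sum_intervalIndicator_eq {α : Type*} [Fintype α] [LinearOrder α]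
    [LocallyFiniteOrder α] {F : α → ℝ} (hF : StrictMono F) (hF01 : ∀ i, F i ∈ Set.Icc 0 1)
    (r : α → ℝ) :
    {v | ∃ g, IsIntervalIndicator g ∧ v = |∑ i, g (F i) * r i|} =
      insert 0 {v | ∃ i j, i ≤ j ∧ v = |∑ k ∈ Icc i j, r k|} := by
  classical
  ext v
  constructor
  · rintro ⟨g, ⟨I, -, hI, rfl⟩, rfl⟩
    rw [sum_indicator_comp_mul]
    have hconn : ((univ.filter fun i => F i ∈ I : Finset α) : Set α).OrdConnected := by
      simpa [Set.preimage] using hI.preimage_mono hF.monotone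
    obtain hempty | ⟨a, b, hab, hIcc⟩ := eq_empty_or_eq_Icc_of_ordConnected _ hconn
    · simp [hempty]
    · exact Or.inr ⟨a, b, hab, by rw [hIcc]⟩
  · rintro (rfl | ⟨i, j, -, rfl⟩)
    · exact ⟨(∅ : Set ℝ).indicator fun _ => 1,
        ⟨∅, Set.empty_subset _, Set.ordConnected_empty, rfl⟩, by simp⟩
    · refine ⟨(Set.Icc (F i) (F j)).indicator fun _ => 1,
        ⟨_, Set.Icc_subset_Icc (hF01 i).1 (hF01 j).2, Set.ordConnected_Icc, rfl⟩, ?_⟩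
      rw [sum_indicator_comp_mul]
      congr 2
      ext k
      simp [hF.le_iff_le]

theorem mcDev_eq_abs_sum_comp {X : Type*} {n m : ℕ} {x : Fin n → X} (y : Fin n → ℝ)
    (f : X → ℝ) {h : X → ℝ} (hbin : ∀ v, h v = 0 ∨ h v = 1) {e : Fin m → Fin n}
    (hinj : Function.Injective e) (hrange : ∀ k, h (x k) = 1 ↔ ∃ i, e i = k) (g : ℝ → ℝ) :
    mcDev n x y f h g = (1 / n : ℝ) * |∑ i, g (f (x (e i))) * (y (e i) - f (x (e i)))| := by
  simp only [mcDev, mul_assoc]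
  rw [sum_mul_eq_sum_comp_of_zero_one (fun k => hbin (x k)) hinj hrange, abs_mul,
    abs_of_nonneg (by positivity)]

open scoped Pointwise

theorem sup_mcDev_eq_ecce_group_general {X : Type*} (n m : ℕ)
    (x : Fin n → X) (y : Fin n → ℝ) (f : X → ℝ) (h : X → ℝ)
    (hbin : ∀ v, h v = 0 ∨ h v = 1)
    (hf : ∀ v, f v ∈ Set.Icc (0 : ℝ) 1)
    (e : Fin m → Fin n) (hinj : Function.Injective e)
    (hrange : ∀ k : Fin n, h (x k) = 1 ↔ ∃ i, e i = k)
    (hmono : Monotone fun i => f (x (e i)))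
    (hfinj : Function.Injective fun i => f (x (e i))) :
    sSup {v : ℝ | ∃ g : ℝ → ℝ, IsIntervalIndicator g ∧ v = mcDev n x y f h g} =
      ((m : ℝ) / n) * ecce m (fun i => y (e i)) (fun i => f (x (e i))) := by
  unfold ecce
  set F : Fin m → ℝ := fun i => f (x (e i))
  set r : Fin m → ℝ := fun i => y (e i) - F i
  set intervalSums := {v | ∃ i j : Fin m, i ≤ j ∧ v = |∑ k ∈ Finset.Icc i j, r k|}
  have hsets : {v | ∃ g, IsIntervalIndicator g ∧ v = mcDev n x y f h g} =
      (1 / n : ℝ) • {v | ∃ g, IsIntervalIndicator g ∧ v = |∑ i, g (F i) * r i|} := by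
    ext v
    simp only [mcDev_eq_abs_sum_comp y f hbin hinj hrange, Set.mem_smul_set, Set.mem_ofPred_eq,
      smul_eq_mul]
    aesop
  have hbdd : BddAbove intervalSums :=
    ((Set.finite_range fun p : Fin m × Fin m => |∑ k ∈ Finset.Icc p.1 p.2, r k|).subset
      (by rintro _ ⟨i, j, -, rfl⟩; exact ⟨(i, j), rfl⟩)).bddAbove
  have hnonneg : ∀ v ∈ intervalSums, 0 ≤ v := by
    rintro _ ⟨i, j, -, rfl⟩
    exact abs_nonneg _
  rw [hsets, Real.sSup_smul_of_nonneg (by positivity),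
    setOf_abs_sum_intervalIndicator_eq (hmono.strictMono_of_injective hfinj) (fun i => hf _),
    Real.sSup_insert_zero hbdd hnonneg, smul_eq_mul]
  obtain rfl | hm := m.eq_zero_or_pos
  · simp [intervalSums]
  field_simp

/-- For a single group `h`, `max_g Δ_{h,g}(f) = (n_h/n)·ECCE_h(f)`, where the subsample
`{k : h(x_k)=1}` of size `m = n_h` is enumerated by `e` in increasing prediction order
with distinct prediction values. -/
theorem sup_mcDev_eq_ecce_group {X : Type*} (n m : ℕ) (hn : 0 < n) (hm : 0 < m)
    (x : Fin n → X) (y : Fin n → ℝ) (f : X → ℝ) (h : X → ℝ)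
    (hbin : ∀ v, h v = 0 ∨ h v = 1) (hy : ∀ k, y k = 0 ∨ y k = 1)
    (hf : ∀ v, f v ∈ Set.Icc (0 : ℝ) 1)
    (e : Fin m → Fin n) (hinj : Function.Injective e)
    (hrange : ∀ k : Fin n, h (x k) = 1 ↔ ∃ i, e i = k)
    (hmono : Monotone fun i => f (x (e i)))
    (hfinj : Function.Injective fun i => f (x (e i))) :
    sSup {v : ℝ | ∃ g : ℝ → ℝ, IsIntervalIndicator g ∧ v = mcDev n x y f h g} =
      ((m : ℝ) / n) * ecce m (fun i => y (e i)) (fun i => f (x (e i))) :=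
  sup_mcDev_eq_ecce_group_general n m x y f h hbin hf e hinj hrange hmono hfinj
end

section
/- Let ℒ(F,y) be the logistic log loss and suppose, for random variables X, Y with Y ∈ {0,1}, a predictor F_t and a correction direction W(X) with E[W(X)²] > 0. Set w* = E[(Y - σ(F_t(X)))·W(X)]/E[W(X)²]. Then E[ℒ(F_t(X),Y)] - E[ℒ(F_t(X) + w*·W(X), Y)] ≥ (1 - 1/4)·E[(Y - σ(F_t(X)))·W(X)]²/E[W(X)²] = (3/4)·E[(Y-σ(F_t(X)))W(X)]²/E[W(X)²]. -/
noncomputable def sigmoid (F : ℝ) : ℝ := 1 / (1 + Real.exp (-F))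

noncomputable def logloss (F y : ℝ) : ℝ :=
  -(y * Real.log (sigmoid F) + (1 - y) * Real.log (1 - sigmoid F))

/-- Expectation over a finite probability space with weights `p`. -/
noncomputable def expect {Ω : Type*} [Fintype Ω] (p : Ω → ℝ) (Z : Ω → ℝ) : ℝ :=
  ∑ ω, p ω * Z ω

/-! `ℒ(·, y)` has derivative `σ(F) - y` for every real `y`, and `t / 4 - σ(t)` is monotone because
`σ' = σ (1 - σ) ≤ 1 / 4`. So `t ↦ t² / 8 - ℒ(t, y)` is convex, and its tangent line at `F` gives
`ℒ(F + h, y) ≤ ℒ(F, y) + (σ(F) - y) h + h² / 8`. Averaging this with `h = w* W(X)` bounds the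
decrease below by `w* A - w*² B / 4 = (3 / 4) A² / B`, where `A = E[(Y - σ(F_t)) W]`, `B = E[W²]`
and `w* = A / B`. -/

theorem image_add_le_of_monotone_mul_sub_deriv {f f' : ℝ → ℝ} {K : ℝ}
    (hf : ∀ t, HasDerivAt f (f' t) t) (hf' : Monotone fun t => K * t - f' t) (x h : ℝ) :
    f (x + h) ≤ f x + f' x * h + K / 2 * h ^ 2 := by
  set g : ℝ → ℝ := fun t => K / 2 * (t - x) ^ 2 - f t + f' x * t
  have hg (t : ℝ) : HasDerivAt g (K * t - f' t - (K * x - f' x)) t := by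
    refine ((((hasDerivAt_id t).sub_const x).pow 2).const_mul (K / 2)).sub (hf t)
      |>.add ((hasDerivAt_id t).const_mul (f' x)) |>.congr_deriv ?_
    simp only [id]
    ring
  have hg_convex : ConvexOn ℝ Set.univ g := by
    refine Monotone.convexOn_univ_of_deriv (fun t => (hg t).differentiableAt) fun a b hab => ?_
    simp only [(hg _).deriv]
    linarith [hf' hab]
  -- `g` is convex with a critical point at `x`, hence minimal there.
  have hg_min : IsMinOn g Set.univ x := by
    refine hg_convex.isMinOn_of_rightDeriv_eq_zero (by simp) ?_
    rw [(hg x).hasDerivWithinAt.derivWithin (uniqueDiffWithinAt_Ioi x), sub_self]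
  have := isMinOn_iff.mp hg_min (x + h) (Set.mem_univ _)
  simp only [g] at this
  linarith

theorem sigmoid_eq_real_sigmoid : sigmoid = Real.sigmoid := funext fun _ => one_div _

theorem monotone_div_four_sub_sigmoid : Monotone fun t => t / 4 - sigmoid t := by
  rw [sigmoid_eq_real_sigmoid]
  refine monotone_of_hasDerivAt_nonneg
    (fun t => ((hasDerivAt_id t).div_const 4).sub (Real.hasDerivAt_sigmoid t)) fun t => ?_
  simp only [Pi.zero_apply]
  nlinarith [sq_nonneg (Real.sigmoid t - 1 / 2)]

theorem hasDerivAt_logloss (F y : ℝ) : HasDerivAt (logloss · y) (sigmoid F - y) F := by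
  rw [funext fun F => logloss.eq_1 F y, sigmoid_eq_real_sigmoid]
  have hσ := Real.hasDerivAt_sigmoid F
  have hσ_ne := (Real.sigmoid_pos F).ne'
  have hσ_ne' := (sub_pos.2 (Real.sigmoid_lt_one F)).ne'
  refine (((hσ.log hσ_ne).const_mul y).add (((hσ.const_sub 1).log hσ_ne').const_mul (1 - y))).neg
    |>.congr_deriv ?_
  field_simp
  ring

theorem logloss_add_le (F y h : ℝ) :
    logloss (F + h) y ≤ logloss F y + (sigmoid F - y) * h + h ^ 2 / 8 := by
  have := image_add_le_of_monotone_mul_sub_deriv (f' := fun F => sigmoid F - y) (K := 1 / 4)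
    (hasDerivAt_logloss · y) ?_ F h
  · linarith
  · simpa only [one_div_mul_eq_div, sub_sub_eq_add_sub, add_sub_right_comm]
      using monotone_div_four_sub_sigmoid.add_const y

theorem expect_sub {Ω : Type*} [Fintype Ω] (p U V : Ω → ℝ) :
    expect p (fun ω => U ω - V ω) = expect p U - expect p V := by
  simp only [expect, mul_sub, Finset.sum_sub_distrib]

theorem expect_const_mul {Ω : Type*} [Fintype Ω] (p U : Ω → ℝ) (c : ℝ) :
    expect p (fun ω => c * U ω) = c * expect p U := by
  simp only [expect, Finset.mul_sum, mul_left_comm]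

theorem expect_mono {Ω : Type*} [Fintype Ω] {p U V : Ω → ℝ} (hp : ∀ ω, 0 ≤ p ω)
    (hUV : ∀ ω, U ω ≤ V ω) : expect p U ≤ expect p V :=
  Finset.sum_le_sum fun ω _ => mul_le_mul_of_nonneg_left (hUV ω) (hp ω)

theorem logloss_decrease_optimal_step_general {Ω : Type*} [Fintype Ω] (p : Ω → ℝ)
    (hp : ∀ ω, 0 ≤ p ω)
    (Ft W Y : Ω → ℝ) :
    expect p (fun ω => logloss (Ft ω) (Y ω)) -
        expect p (fun ω => logloss
          (Ft ω + (expect p (fun ω => (Y ω - sigmoid (Ft ω)) * W ω) /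
            expect p (fun ω => W ω ^ 2)) * W ω) (Y ω)) ≥
      (1 - 1 / 4) * (expect p (fun ω => (Y ω - sigmoid (Ft ω)) * W ω)) ^ 2 /
        expect p (fun ω => W ω ^ 2) := by
  set A := expect p (fun ω => (Y ω - sigmoid (Ft ω)) * W ω)
  set B := expect p (fun ω => W ω ^ 2)
  calc _ = expect p (fun ω => logloss (Ft ω) (Y ω) - logloss (Ft ω + A / B * W ω) (Y ω)) :=
        (expect_sub _ _ _).symm
    _ ≥ expect p (fun ω => A / B * ((Y ω - sigmoid (Ft ω)) * W ω) - (A / B) ^ 2 / 4 * W ω ^ 2) :=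
        expect_mono hp fun ω => by
          nlinarith [logloss_add_le (Ft ω) (Y ω) (A / B * W ω), sq_nonneg (A / B * W ω)]
    _ = A / B * A - (A / B) ^ 2 / 4 * B := by
        rw [expect_sub, expect_const_mul, expect_const_mul]
    -- also when `B = 0`, where `A / B = 0`
    _ = _ := by field_simp

/-- Adding the optimally scaled correction direction `w*·W` to the logit decreases
the expected log loss by at least `(3/4)·E[(Y-σ(F_t))W]²/E[W²]`. -/
theorem logloss_decrease_optimal_step {Ω : Type*} [Fintype Ω] (p : Ω → ℝ)
    (hp : ∀ ω, 0 ≤ p ω) (hp1 : ∑ ω, p ω = 1)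
    (Ft W Y : Ω → ℝ) (hY : ∀ ω, Y ω = 0 ∨ Y ω = 1)
    (hW2 : 0 < expect p (fun ω => W ω ^ 2)) :
    expect p (fun ω => logloss (Ft ω) (Y ω)) -
        expect p (fun ω => logloss
          (Ft ω + (expect p (fun ω => (Y ω - sigmoid (Ft ω)) * W ω) /
            expect p (fun ω => W ω ^ 2)) * W ω) (Y ω)) ≥
      (1 - 1 / 4) * (expect p (fun ω => (Y ω - sigmoid (Ft ω)) * W ω)) ^ 2 /
        expect p (fun ω => W ω ^ 2) :=
  logloss_decrease_optimal_step_general p hp Ft W Y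
end
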